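/- arXiv:1803.03572 — 4 statements merged into one kernel-verified Lean document; each statement's English description precedes it below -/
import Mathlib

section
/- Let Q be a finite group acting on a finite abelian group A (written multiplicatively) by automorphisms, and let f : Q × Q → A be a 2-cocycle, i.e. (q₁ • f(q₂,q₃)) · f(q₁, q₂q₃) = f(q₁q₂, q₃) · f(q₁,q₂) for all q₁,q₂,q₃ ∈ Q. Let A* = Hom(A, ℂˣ) be the character group, and let Q ⋉ A* be the group with underlying set Q × A* and multiplication (q,χ)(q',χ') = (qq', (χ ∘ ρ(q'))·χ'), where (χ ∘ ρ(q'))(a) = χ(q' • a). Define φ_f : (Q ⋉ A*)³ → ℂˣ by φ_f((q₁,χ₁),(q₂,χ₂),(q₃,χ₃)) = χ₁(f(q₂,q₃)). Then φ_f is a 3-cocycle on Q ⋉ A* with coefficients in ℂˣ (trivial action), i.e. φ_f(h₂,h₃,h₄) · φ_f(h₁,h₂h₃,h₄) · φ_f(h₁,h₂,h₃) = φ_f(h₁h₂,h₃,h₄) · φ_f(h₁,h₂,h₃h₄) for all h₁,h₂,h₃,h₄ ∈ Q ⋉ A*. -/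
/-! Only the first character enters `φ_f`, and on the product `h₁h₂` it becomes `χ₁ ∘ ρ(q₂) · χ₂`.
Expanding the five factors, the `χ₂`-terms cancel and what remains is the character `χ₁` applied
to the 2-cocycle identity of `f` at `(q₂, q₃, q₄)`. -/

/-- The multiplication of the semidirect product `Q ⋉ A*`:
`(q,χ)(q',χ') = (qq', (χ ∘ ρ(q'))·χ')` where `(χ ∘ ρ(q'))(a) = χ(q' • a)`. -/
def sdMul {Q A : Type} [Group Q] [CommGroup A] [MulDistribMulAction Q A]
    (h h' : Q × (A →* ℂˣ)) : Q × (A →* ℂˣ) :=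
  (h.1 * h'.1, (h.2.comp (MulDistribMulAction.toMonoidHom A h'.1)) * h'.2)

section SemidirectProduct

variable {Q A : Type} [Group Q] [CommGroup A] [MulDistribMulAction Q A]

@[simp]
theorem sdMul_fst (h h' : Q × (A →* ℂˣ)) : (sdMul h h').1 = h.1 * h'.1 := rfl

@[simp]
theorem sdMul_snd_apply (h h' : Q × (A →* ℂˣ)) (a : A) :
    (sdMul h h').2 a = h.2 (h'.1 • a) * h'.2 a := rfl

end SemidirectProduct

theorem phi_f_is_three_cocycle_general
    (Q A : Type) [Group Q] [CommGroup A]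
    [MulDistribMulAction Q A]
    (f : Q → Q → A)
    (hf : ∀ q₁ q₂ q₃ : Q,
      (q₁ • f q₂ q₃) * f q₁ (q₂ * q₃) = f (q₁ * q₂) q₃ * f q₁ q₂)
    (φ : (Q × (A →* ℂˣ)) → (Q × (A →* ℂˣ)) → (Q × (A →* ℂˣ)) → ℂˣ)
    (hφ : ∀ h₁ h₂ h₃ : Q × (A →* ℂˣ), φ h₁ h₂ h₃ = h₁.2 (f h₂.1 h₃.1)) :
    ∀ h₁ h₂ h₃ h₄ : Q × (A →* ℂˣ),
      φ h₂ h₃ h₄ * φ h₁ (sdMul h₂ h₃) h₄ * φ h₁ h₂ h₃ =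
        φ (sdMul h₁ h₂) h₃ h₄ * φ h₁ h₂ (sdMul h₃ h₄) := by
  rintro ⟨q₁, χ₁⟩ ⟨q₂, χ₂⟩ ⟨q₃, χ₃⟩ ⟨q₄, χ₄⟩
  simp only [hφ, sdMul_fst, sdMul_snd_apply]
  have cocycle_under_χ₁ :
      χ₁ (q₂ • f q₃ q₄) * χ₁ (f q₂ (q₃ * q₄)) = χ₁ (f (q₂ * q₃) q₄) * χ₁ (f q₂ q₃) := by
    rw [← map_mul, ← map_mul, hf]
  calc χ₂ (f q₃ q₄) * χ₁ (f (q₂ * q₃) q₄) * χ₁ (f q₂ q₃)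
      = χ₂ (f q₃ q₄) * (χ₁ (q₂ • f q₃ q₄) * χ₁ (f q₂ (q₃ * q₄))) := by
        rw [mul_assoc, cocycle_under_χ₁]
    _ = χ₁ (q₂ • f q₃ q₄) * χ₂ (f q₃ q₄) * χ₁ (f q₂ (q₃ * q₄)) := by
        rw [mul_left_comm, mul_assoc]

/-- Let `Q` be a finite group acting on a finite abelian group `A` by
automorphisms, and let `f : Q × Q → A` be a 2-cocycle.  Define
`φ_f((q₁,χ₁),(q₂,χ₂),(q₃,χ₃)) = χ₁(f(q₂,q₃))` on the semidirect product `Q ⋉ A*`.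
Then `φ_f` is a 3-cocycle on `Q ⋉ A*` with coefficients in `ℂˣ` (trivial action). -/
theorem phi_f_is_three_cocycle
    (Q A : Type) [Group Q] [Finite Q] [CommGroup A] [Finite A]
    [MulDistribMulAction Q A]
    (f : Q → Q → A)
    (hf : ∀ q₁ q₂ q₃ : Q,
      (q₁ • f q₂ q₃) * f q₁ (q₂ * q₃) = f (q₁ * q₂) q₃ * f q₁ q₂)
    (φ : (Q × (A →* ℂˣ)) → (Q × (A →* ℂˣ)) → (Q × (A →* ℂˣ)) → ℂˣ)
    (hφ : ∀ h₁ h₂ h₃ : Q × (A →* ℂˣ), φ h₁ h₂ h₃ = h₁.2 (f h₂.1 h₃.1)) :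
    ∀ h₁ h₂ h₃ h₄ : Q × (A →* ℂˣ),
      φ h₂ h₃ h₄ * φ h₁ (sdMul h₂ h₃) h₄ * φ h₁ h₂ h₃ =
        φ (sdMul h₁ h₂) h₃ h₄ * φ h₁ h₂ (sdMul h₃ h₄) :=
  phi_f_is_three_cocycle_general Q A f hf φ hφ
end

section
/- Let Q be a finite group acting on a finite abelian group A (written multiplicatively) by automorphisms, A* = Hom(A, ℂˣ), and Q ⋉ A* the group with multiplication (q,χ)(q',χ') = (qq', (χ ∘ ρ(q'))·χ'), where (χ ∘ ρ(q'))(a) = χ(q' • a). Suppose f : Q × Q → A is a 2-coboundary, i.e. there exists g : Q → A with f(q,q') = (q • g(q')) · g(qq')⁻¹ · g(q) for all q,q' ∈ Q. Then the function φ_f((q₁,χ₁),(q₂,χ₂),(q₃,χ₃)) = χ₁(f(q₂,q₃)) is a 3-coboundary on Q ⋉ A* with coefficients in ℂˣ (trivial action); explicitly, φ_f(h₁,h₂,h₃) = ψ(h₂,h₃) · ψ(h₁h₂,h₃)⁻¹ · ψ(h₁,h₂h₃) · ψ(h₁,h₂)⁻¹ for ψ((q,χ),(q',χ')) = χ(g(q'))⁻¹.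 Consequently the assignment f ↦ φ_f induces a well-defined map from H²(Q, A) to H³(Q ⋉ A*, ℂˣ). -/
theorem phi_f_is_three_coboundary_general
    (Q A : Type) [Group Q] [CommGroup A]
    [MulDistribMulAction Q A]
    (f : Q → Q → A) (g : Q → A)
    (hf : ∀ q q' : Q, f q q' = (q • g q') * (g (q * q'))⁻¹ * g q)
    (φ : (Q × (A →* ℂˣ)) → (Q × (A →* ℂˣ)) → (Q × (A →* ℂˣ)) → ℂˣ)
    (hφ : ∀ h₁ h₂ h₃ : Q × (A →* ℂˣ), φ h₁ h₂ h₃ = h₁.2 (f h₂.1 h₃.1))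
    (ψ : (Q × (A →* ℂˣ)) → (Q × (A →* ℂˣ)) → ℂˣ)
    (hψ : ∀ h h' : Q × (A →* ℂˣ), ψ h h' = (h.2 (g h'.1))⁻¹) :
    ∀ h₁ h₂ h₃ : Q × (A →* ℂˣ),
      φ h₁ h₂ h₃ =
        ψ h₂ h₃ * (ψ (sdMul h₁ h₂) h₃)⁻¹ * ψ h₁ (sdMul h₂ h₃) * (ψ h₁ h₂)⁻¹ := by
  rintro ⟨q₁, χ₁⟩ ⟨q₂, χ₂⟩ ⟨q₃, χ₃⟩
  simp only [hφ, hψ, hf, sdMul_fst, sdMul_snd_apply, map_mul, map_inv, inv_inv]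
  -- `ψ(h₁h₂, h₃)⁻¹ = χ₁(q₂ • g q₃) · χ₂(g q₃)`, whose `χ₂`-factor cancels `ψ(h₂, h₃)`;
  -- the remaining three factors are `χ₁` applied to the coboundary formula for `f q₂ q₃`.
  rw [inv_mul_cancel_comm_assoc]

/-- Let `Q` act on a finite abelian group `A` by automorphisms and suppose
`f : Q × Q → A` is a 2-coboundary, say `f(q,q') = (q • g(q')) · g(qq')⁻¹ · g(q)`.
Then `φ_f((q₁,χ₁),(q₂,χ₂),(q₃,χ₃)) = χ₁(f(q₂,q₃))` is a 3-coboundary on `Q ⋉ A*` with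
coefficients in `ℂˣ` (trivial action); explicitly
`φ_f(h₁,h₂,h₃) = ψ(h₂,h₃) · ψ(h₁h₂,h₃)⁻¹ · ψ(h₁,h₂h₃) · ψ(h₁,h₂)⁻¹` where
`ψ((q,χ),(q',χ')) = χ(g(q'))⁻¹`. -/
theorem phi_f_is_three_coboundary
    (Q A : Type) [Group Q] [Finite Q] [CommGroup A] [Finite A]
    [MulDistribMulAction Q A]
    (f : Q → Q → A) (g : Q → A)
    (hf : ∀ q q' : Q, f q q' = (q • g q') * (g (q * q'))⁻¹ * g q)
    (φ : (Q × (A →* ℂˣ)) → (Q × (A →* ℂˣ)) → (Q × (A →* ℂˣ)) → ℂˣ)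
    (hφ : ∀ h₁ h₂ h₃ : Q × (A →* ℂˣ), φ h₁ h₂ h₃ = h₁.2 (f h₂.1 h₃.1))
    (ψ : (Q × (A →* ℂˣ)) → (Q × (A →* ℂˣ)) → ℂˣ)
    (hψ : ∀ h h' : Q × (A →* ℂˣ), ψ h h' = (h.2 (g h'.1))⁻¹) :
    ∀ h₁ h₂ h₃ : Q × (A →* ℂˣ),
      φ h₁ h₂ h₃ =
        ψ h₂ h₃ * (ψ (sdMul h₁ h₂) h₃)⁻¹ * ψ h₁ (sdMul h₂ h₃) * (ψ h₁ h₂)⁻¹ :=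
  phi_f_is_three_coboundary_general Q A f g hf φ hφ ψ hψ
end

section
/- Let Q and K be finite groups such that H²(Q, ℂˣ) and H²(K, ℂˣ) are both trivial (coefficients with trivial action). Then there is an isomorphism of abelian groups H²(Q, Hom(K, ℂˣ)) ≅ H²(K, Hom(Q, ℂˣ)), where Hom(K, ℂˣ) and Hom(Q, ℂˣ) carry the trivial actions of Q and K respectively. -/
/-!
Let `S` be the group of functions `c : G → H → M` whose coboundary in the first variable,
`(g, g') ↦ c g' · c (g g')⁻¹ · c g`, is a character in the second variable; this condition is
symmetric in `G` and `H`. Taking that coboundary maps `S` to 2-cocycles of `G` with values in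
`H →* M`, and onto `H²(G, H →* M)` when `H²(G, M) = 0`: split each evaluation of a cocycle at
`h : H`. A class vanishes exactly when `c` is a product of a function that is a character in `h`
and one that is a character in `g`, which is again symmetric. Hence both second cohomology groups
are the same quotient of `S`.
-/

namespace groupCohomology

section Cochains

variable {G H A B : Type*} [AddCommGroup A] [AddCommGroup B]

def trivialCoboundary [Mul G] : (G → B) →+ (G × G → B) where
  toFun x p := x p.2 - x (p.1 * p.2) + x p.1
  map_zero' := by ext; simp
  map_add' x y := by ext; simp only [Pi.add_apply]; abel

lemma trivialCoboundary_apply [Mul G] (x : G → B) (p : G × G) :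
    trivialCoboundary x p = x p.2 - x (p.1 * p.2) + x p.1 := rfl

lemma map_trivialCoboundary [Mul G] (φ : B →+ A) (x : G → B) (p : G × G) :
    φ (trivialCoboundary x p) = trivialCoboundary (φ ∘ x) p := by
  simp [trivialCoboundary_apply]

variable (G H A) in
def rightChars [Mul H] : AddSubgroup (G → H → A) where
  carrier := {c | ∀ g h h', c g (h * h') = c g h + c g h'}
  zero_mem' := by simp
  add_mem' hc hd g h h' := by simp only [Pi.add_apply, hc g h h', hd g h h']; abel
  neg_mem' hc g h h' := by simp only [Pi.neg_apply, hc g h h']; abel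

variable (G H A) in
def leftChars [Mul G] : AddSubgroup (G → H → A) where
  carrier := {c | ∀ g g' h, c (g * g') h = c g h + c g' h}
  zero_mem' := by simp
  add_mem' hc hd g g' h := by simp only [Pi.add_apply, hc g g' h, hd g g' h]; abel
  neg_mem' hc g g' h := by simp only [Pi.neg_apply, hc g g' h]; abel

lemma trivialCoboundary_eq_zero_iff [Mul G] {c : G → H → A} :
    trivialCoboundary c = 0 ↔ c ∈ leftChars G H A := by
  refine ⟨fun hc g g' h => ?_, fun hc => ?_⟩
  · have := congrFun (congrFun hc (g, g')) h
    simp only [trivialCoboundary_apply, Pi.add_apply, Pi.sub_apply, Pi.zero_apply] at this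
    rw [← sub_eq_zero, ← neg_eq_zero, ← this]
    abel
  · ext p h
    simp only [trivialCoboundary_apply, Pi.add_apply, Pi.sub_apply, Pi.zero_apply, hc p.1 p.2 h]
    abel

variable (G H A) in
def mixedCochains [Mul G] [Mul H] : AddSubgroup (G → H → A) :=
  (rightChars (G × G) H A).comap trivialCoboundary

lemma mem_mixedCochains_iff [Mul G] [Mul H] {c : G → H → A} :
    c ∈ mixedCochains G H A ↔ ∀ g g' h h',
      c g' (h * h') - c (g * g') (h * h') + c g (h * h') =
        (c g' h - c (g * g') h + c g h) + (c g' h' - c (g * g') h' + c g h') := by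
  simp [mixedCochains, rightChars, trivialCoboundary_apply]

lemma swap_mem_mixedCochains [Mul G] [Mul H] {c : G → H → A} (hc : c ∈ mixedCochains G H A) :
    Function.swap c ∈ mixedCochains H G A := by
  rw [mem_mixedCochains_iff] at hc ⊢
  intro h h' g g'
  simp only [Function.swap]
  rw [← sub_eq_zero, ← sub_eq_zero.2 (hc g g' h h')]
  abel

lemma swap_mem_sup [Mul G] [Mul H] {c : G → H → A}
    (hc : c ∈ rightChars G H A ⊔ leftChars G H A) :
    Function.swap c ∈ rightChars H G A ⊔ leftChars H G A := by
  obtain ⟨b, hb, a, ha, rfl⟩ := AddSubgroup.mem_sup.1 hc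
  have hb' : Function.swap b ∈ leftChars H G A := fun h h' g => hb g h h'
  have ha' : Function.swap a ∈ rightChars H G A := fun h g g' => ha g g' h
  rw [sup_comm]
  exact AddSubgroup.add_mem_sup hb' ha'

def swapMixedCochains [Mul G] [Mul H] : mixedCochains G H A ≃+ mixedCochains H G A where
  toFun c := ⟨Function.swap c, swap_mem_mixedCochains c.2⟩
  invFun c := ⟨Function.swap c, swap_mem_mixedCochains c.2⟩
  left_inv _ := rfl
  right_inv _ := rfl
  map_add' _ _ := rfl

end Cochains

section TrivialCohomology

variable {G B : Type} [Group G] [AddCommGroup B]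

lemma mem_cocycles₂_trivial_iff (f : G × G → B) :
    f ∈ cocycles₂ (Rep.trivial ℤ G B) ↔
      ∀ g g' g'', f (g * g', g'') + f (g, g') = f (g', g'') + f (g, g' * g'') := by
  simp [mem_cocycles₂_iff]

lemma mem_coboundaries₂_trivial_iff (f : G × G → B) :
    f ∈ coboundaries₂ (Rep.trivial ℤ G B) ↔ ∃ x : G → B, trivialCoboundary x = f := by
  have hd (x : G → B) : (d₁₂ (Rep.trivial ℤ G B)).hom x = trivialCoboundary x := by
    ext p; simp [d₁₂_hom_apply, trivialCoboundary_apply]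
  simp only [coboundaries₂, LinearMap.mem_range, hd]

lemma trivialCoboundary_mem_cocycles₂ (x : G → B) :
    trivialCoboundary x ∈ cocycles₂ (Rep.trivial ℤ G B) :=
  coboundaries₂_le_cocycles₂ _ ((mem_coboundaries₂_trivial_iff _).2 ⟨x, rfl⟩)

lemma exists_trivialCoboundary_eq (hG : Subsingleton (H2 (Rep.trivial ℤ G B)))
    (f : cocycles₂ (Rep.trivial ℤ G B)) : ∃ x : G → B, trivialCoboundary x = f :=
  (mem_coboundaries₂_trivial_iff _).1 ((H2π_eq_zero_iff f).1 (Subsingleton.elim _ _))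

end TrivialCohomology

section Characters

variable {X H M : Type} [Group H] [CommGroup M]

def evalAt (h : H) : Additive (H →* M) →+ Additive M := MonoidHom.toAdditive (MonoidHom.eval h)

lemma evalAt_apply (h : H) (x : Additive (H →* M)) : evalAt h x = .ofMul (x.toMul h) := rfl

lemma ext_evalAt {x y : Additive (H →* M)} (hxy : ∀ h, evalAt h x = evalAt h y) : x = y :=
  Additive.toMul.injective (MonoidHom.ext fun h => Additive.ofMul.injective (hxy h))

variable (X H M) in
def rightCharsEquiv : rightChars X H (Additive M) ≃+ (X → Additive (H →* M)) where
  toFun b x := .ofMul (MonoidHom.mk' (fun h => (b.1 x h).toMul) fun h h' => by rw [b.2 x]; rfl)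
  invFun y := ⟨fun x h => evalAt h (y x), fun x h h' => by simp [evalAt_apply]⟩
  left_inv _ := rfl
  right_inv _ := rfl
  map_add' _ _ := rfl

end Characters

section CharacterCoefficients

variable {G H M : Type} [Group G] [Group H] [CommGroup M]

variable (G H M) in
def toCocycles₂ :
    mixedCochains G H (Additive M) →+ cocycles₂ (Rep.trivial ℤ G (Additive (H →* M))) :=
  AddMonoidHom.codRestrict ((rightCharsEquiv (G × G) H M).toAddMonoidHom.comp
      (trivialCoboundary.addSubgroupComap (rightChars (G × G) H (Additive M)))) _ fun c => by
    rw [mem_cocycles₂_trivial_iff]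
    intro g g' g''
    refine ext_evalAt fun h => ?_
    simp only [map_add]
    exact congrFun
      ((mem_cocycles₂_trivial_iff _).1 (trivialCoboundary_mem_cocycles₂ c.1) g g' g'') h

lemma evalAt_toCocycles₂ (c : mixedCochains G H (Additive M)) (p : G × G) (h : H) :
    evalAt h (toCocycles₂ G H M c p) = trivialCoboundary c.1 p h := rfl

variable (G H M) in
noncomputable def toH2 :
    mixedCochains G H (Additive M) →+ H2 (Rep.trivial ℤ G (Additive (H →* M))) :=
  (H2π _).hom.toAddMonoidHom.comp (toCocycles₂ G H M)

lemma toH2_surjective (hG : Subsingleton (H2 (Rep.trivial ℤ G (Additive M)))) :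
    Function.Surjective (toH2 G H M) := by
  intro y
  obtain ⟨f, rfl⟩ := (ModuleCat.epi_iff_surjective (H2π _)).1 inferInstance y
  have hslice (h : H) : (fun p => evalAt h (f p)) ∈ cocycles₂ (Rep.trivial ℤ G (Additive M)) := by
    rw [mem_cocycles₂_trivial_iff]
    intro g g' g''
    simpa only [map_add, cocycles₂.val_eq_coe] using
      congrArg (evalAt h) ((mem_cocycles₂_trivial_iff _).1 f.2 g g' g'')
  choose x hx using fun h => exists_trivialCoboundary_eq hG ⟨_, hslice h⟩
  have hc : trivialCoboundary (Function.swap x) = fun p h => evalAt h (f p) := by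
    ext p h
    exact congrFun (hx h) p
  refine ⟨⟨Function.swap x, fun p h h' => ?_⟩, ?_⟩
  · simp only [hc, evalAt_apply, map_mul, ofMul_mul]
  · refine congrArg (H2π _).hom (cocycles₂_ext fun g g' => ext_evalAt fun h => ?_)
    rw [evalAt_toCocycles₂, hc]

lemma toH2_eq_zero_iff (c : mixedCochains G H (Additive M)) :
    toH2 G H M c = 0 ↔ c.1 ∈ rightChars G H (Additive M) ⊔ leftChars G H (Additive M) := by
  rw [toH2, AddMonoidHom.comp_apply, LinearMap.toAddMonoidHom_coe, H2π_eq_zero_iff,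
    mem_coboundaries₂_trivial_iff, AddSubgroup.mem_sup]
  constructor
  · rintro ⟨x, hx⟩
    set b := (rightCharsEquiv G H M).symm x
    refine ⟨b.1, b.2, c.1 - b.1, ?_, add_sub_cancel _ _⟩
    rw [← trivialCoboundary_eq_zero_iff, map_sub, sub_eq_zero]
    ext p h
    rw [← evalAt_toCocycles₂, ← hx, map_trivialCoboundary]
    rfl
  · rintro ⟨b, hb, a, ha, hc⟩
    refine ⟨rightCharsEquiv G H M ⟨b, hb⟩, funext fun p => ext_evalAt fun h => ?_⟩
    rw [map_trivialCoboundary, evalAt_toCocycles₂, ← hc, map_add,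
      trivialCoboundary_eq_zero_iff.2 ha, add_zero]
    rfl

lemma ker_toH2_eq_ker_toH2_comp_swap :
    (toH2 G H M).ker = ((toH2 H G M).comp swapMixedCochains.toAddMonoidHom).ker := by
  ext c
  rw [AddMonoidHom.mem_ker, AddMonoidHom.mem_ker, AddMonoidHom.comp_apply, toH2_eq_zero_iff,
    toH2_eq_zero_iff]
  exact ⟨swap_mem_sup, swap_mem_sup (c := Function.swap c.1)⟩

noncomputable def h2CharactersEquiv (hG : Subsingleton (H2 (Rep.trivial ℤ G (Additive M))))
    (hH : Subsingleton (H2 (Rep.trivial ℤ H (Additive M)))) :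
    H2 (Rep.trivial ℤ G (Additive (H →* M))) ≃+ H2 (Rep.trivial ℤ H (Additive (G →* M))) :=
  (QuotientAddGroup.quotientKerEquivOfSurjective _ (toH2_surjective hG)).symm.trans <|
    (QuotientAddGroup.quotientAddEquivOfEq ker_toH2_eq_ker_toH2_comp_swap).trans <|
      QuotientAddGroup.quotientKerEquivOfSurjective _ <|
        (toH2_surjective hH).comp swapMixedCochains.surjective

end CharacterCoefficients

end groupCohomology

theorem h2_characters_symm_general
    (Q K : Type) [Group Q] [Group K]
    (hQ : Subsingleton (groupCohomology (Rep.trivial ℤ Q (Additive ℂˣ)) 2))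
    (hK : Subsingleton (groupCohomology (Rep.trivial ℤ K (Additive ℂˣ)) 2)) :
    Nonempty
      (groupCohomology (Rep.trivial ℤ Q (Additive (K →* ℂˣ))) 2 ≃+
        groupCohomology (Rep.trivial ℤ K (Additive (Q →* ℂˣ))) 2) :=
  ⟨groupCohomology.h2CharactersEquiv hQ hK⟩

/-- Let `Q` and `K` be finite groups with `H²(Q, ℂˣ)` and `H²(K, ℂˣ)`
both trivial (trivial actions).  Then `H²(Q, Hom(K, ℂˣ)) ≅ H²(K, Hom(Q, ℂˣ))` as
abelian groups, where the character groups carry the trivial actions. -/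
theorem h2_characters_symm
    (Q K : Type) [Group Q] [Finite Q] [Group K] [Finite K]
    (hQ : Subsingleton (groupCohomology (Rep.trivial ℤ Q (Additive ℂˣ)) 2))
    (hK : Subsingleton (groupCohomology (Rep.trivial ℤ K (Additive ℂˣ)) 2)) :
    Nonempty
      (groupCohomology (Rep.trivial ℤ Q (Additive (K →* ℂˣ))) 2 ≃+
        groupCohomology (Rep.trivial ℤ K (Additive (Q →* ℂˣ))) 2) :=
  h2_characters_symm_general Q K hQ hK
end

section
/- Let A be a finite abelian group (written multiplicatively) and A* = Hom(A, ℂˣ) its character group. Let q : A × A* → ℂˣ be defined by q(a, χ) = χ(a). Call B : A × A → ℂˣ an alternating bicharacter if it is multiplicative in each variable and B(a,a) = 1 for all a ∈ A. For an alternating bicharacter B and an automorphism φ of A, define T_{B,φ} : A × A* → A × A* by T_{B,φ}(a, χ) = (φ(a), (B(a,−)·χ) ∘ φ⁻¹). Then: (1) each T_{B,φ} is a group automorphism of A × A* satisfying q(T_{B,φ}(a,χ)) = q(a,χ) for all (a,χ); (2) T_{B,φ} ∘ T_{B',φ'} = T_{B'',φφ'} where B''(a,a') = B(φ'(a), φ'(a'))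 · B'(a,a'); and (3) the assignment (B, φ) ↦ T_{B,φ} is injective, so it defines an injective group homomorphism from the semidirect product of the group of alternating bicharacters on A by Aut(A) into the group of q-preserving automorphisms of A × A*. -/
/-- An alternating bicharacter on a (multiplicative) abelian group `A` with values
in `ℂˣ`: multiplicative in each variable and `B(a,a) = 1`. -/
def IsAltBichar {A : Type} [CommGroup A] (B : A → A → ℂˣ) : Prop :=
  (∀ a a' x : A, B (a * a') x = B a x * B a' x) ∧
  (∀ a x x' : A, B a (x * x') = B a x * B a x') ∧
  (∀ a : A, B a a = 1)

/-- The map `T_{B,φ} : A × A* → A × A*`, `(a, χ) ↦ (φ(a), (B(a,−)·χ) ∘ φ⁻¹)`. -/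
def Tmap {A : Type} [CommGroup A] {B : A → A → ℂˣ} (hB : IsAltBichar B)
    (φ : A ≃* A) : A × (A →* ℂˣ) → A × (A →* ℂˣ) :=
  fun p =>
    (φ p.1, (MonoidHom.mk' (B p.1) (fun x x' => hB.2.1 p.1 x x') * p.2).comp
      φ.symm.toMonoidHom)

/-- The quadratic form `q(a, χ) = χ(a)` on `A × A*`. -/
def qForm {A : Type} [CommGroup A] (p : A × (A →* ℂˣ)) : ℂˣ := p.2 p.1

/-!
`T_{B,φ}` preserves `q` because `q(T_{B,φ}(a,χ)) = B(a,a)·χ(a)` and `B` is alternating.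
Unwinding the definitions gives the composition law
`T_{B,φ} ∘ T_{B',φ'} = T_{B(φ'−,φ'−)·B', φφ'}`, and `T_{1,id} = id`; so `T_{B,φ}` has the two-sided
inverse `T_{B(φ⁻¹−,φ⁻¹−)⁻¹, φ⁻¹}`. Finally `T_{B,φ}(a,1) = (φ(a), B(a,−) ∘ φ⁻¹)` recovers both `φ`
and `B`.
-/

namespace IsAltBichar

variable {A : Type} [CommGroup A] {B B' : A → A → ℂˣ}

theorem one : IsAltBichar (fun _ _ : A => (1 : ℂˣ)) :=
  ⟨fun _ _ _ => (mul_one 1).symm, fun _ _ _ => (mul_one 1).symm, fun _ => rfl⟩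

theorem mul (hB : IsAltBichar B) (hB' : IsAltBichar B') :
    IsAltBichar (fun a a' => B a a' * B' a a') :=
  ⟨fun a a' x => by simp only [hB.1, hB'.1, mul_mul_mul_comm],
   fun a x x' => by simp only [hB.2.1, hB'.2.1, mul_mul_mul_comm],
   fun a => by simp only [hB.2.2, hB'.2.2, mul_one]⟩

theorem inv (hB : IsAltBichar B) : IsAltBichar (fun a a' => (B a a')⁻¹) :=
  ⟨fun a a' x => by simp only [hB.1, mul_inv],
   fun a x x' => by simp only [hB.2.1, mul_inv],
   fun a => by simp only [hB.2.2, inv_one]⟩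

theorem comp {A' : Type} [CommGroup A'] (hB : IsAltBichar B) (f : A' →* A) :
    IsAltBichar (fun a a' => B (f a) (f a')) :=
  ⟨fun a a' x => by simp only [map_mul, hB.1],
   fun a x x' => by simp only [map_mul, hB.2.1],
   fun a => hB.2.2 (f a)⟩

end IsAltBichar

section Tmap

variable {A : Type} [CommGroup A] {B B' : A → A → ℂˣ}

@[simp]
theorem Tmap_fst (hB : IsAltBichar B) (φ : A ≃* A) (p : A × (A →* ℂˣ)) :
    (Tmap hB φ p).1 = φ p.1 :=
  rfl

@[simp]
theorem Tmap_snd_apply (hB : IsAltBichar B) (φ : A ≃* A) (p : A × (A →* ℂˣ)) (x : A) :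
    (Tmap hB φ p).2 x = B p.1 (φ.symm x) * p.2 (φ.symm x) :=
  rfl

theorem Tmap_congr (hB : IsAltBichar B) (hB' : IsAltBichar B') {φ φ' : A ≃* A}
    (hBB' : B = B') (hφ : φ = φ') : Tmap hB φ = Tmap hB' φ' := by
  subst hBB' hφ
  rfl

theorem Tmap_one_refl : Tmap (IsAltBichar.one (A := A)) (MulEquiv.refl A) = id := by
  funext p
  ext x <;> simp

theorem Tmap_mul (hB : IsAltBichar B) (φ : A ≃* A) (p p' : A × (A →* ℂˣ)) :
    Tmap hB φ (p * p') = Tmap hB φ p * Tmap hB φ p' := by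
  ext x
  · exact map_mul φ _ _
  · simp only [Tmap_snd_apply, Prod.fst_mul, Prod.snd_mul, MonoidHom.mul_apply, hB.1]
    ac_rfl

theorem Tmap_comp (hB : IsAltBichar B) (hB' : IsAltBichar B') (φ φ' : A ≃* A) :
    Tmap hB φ ∘ Tmap hB' φ' = Tmap ((hB.comp φ'.toMonoidHom).mul hB') (φ'.trans φ) := by
  funext p
  ext x
  · rfl
  · simp [mul_assoc]

theorem qForm_Tmap (hB : IsAltBichar B) (φ : A ≃* A) (p : A × (A →* ℂˣ)) :
    qForm (Tmap hB φ p) = qForm p := by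
  simp [qForm, hB.2.2]

theorem Tmap_bijective (hB : IsAltBichar B) (φ : A ≃* A) : Function.Bijective (Tmap hB φ) := by
  have hC := (hB.comp φ.symm.toMonoidHom).inv
  refine Function.bijective_iff_has_inverse.mpr ⟨Tmap hC φ.symm, ?_, ?_⟩
  · rw [Function.leftInverse_iff_comp, Tmap_comp, ← Tmap_one_refl]
    refine Tmap_congr _ _ ?_ φ.self_trans_symm
    funext a a'
    simp
  · rw [Function.rightInverse_iff_comp, Tmap_comp, ← Tmap_one_refl]
    refine Tmap_congr _ _ ?_ φ.symm_trans_self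
    funext a a'
    simp

theorem eq_and_eq_of_Tmap_eq (hB : IsAltBichar B) (hB' : IsAltBichar B') {φ φ' : A ≃* A}
    (h : Tmap hB φ = Tmap hB' φ') : B = B' ∧ φ = φ' := by
  have hφ : φ = φ' := MulEquiv.ext fun a => congrArg Prod.fst (congrFun h (a, 1))
  subst hφ
  refine ⟨funext fun a => funext fun x => ?_, rfl⟩
  simpa using DFunLike.congr_fun (congrArg Prod.snd (congrFun h (a, 1))) (φ x)

end Tmap

theorem Tmap_orthogonal_embedding_general (A : Type) [CommGroup A] :
    (∀ (B : A → A → ℂˣ) (hB : IsAltBichar B) (φ : A ≃* A),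
      (∀ p p' : A × (A →* ℂˣ), Tmap hB φ (p * p') = Tmap hB φ p * Tmap hB φ p') ∧
      Function.Bijective (Tmap hB φ) ∧
      (∀ p : A × (A →* ℂˣ), qForm (Tmap hB φ p) = qForm p)) ∧
    (∀ (B B' : A → A → ℂˣ) (hB : IsAltBichar B) (hB' : IsAltBichar B')
        (φ φ' : A ≃* A),
      ∃ hB'' : IsAltBichar (fun a a' => B (φ' a) (φ' a') * B' a a'),
        Tmap hB φ ∘ Tmap hB' φ' = Tmap hB'' (φ'.trans φ)) ∧
    (∀ (B B' : A → A → ℂˣ) (hB : IsAltBichar B) (hB' : IsAltBichar B')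
        (φ φ' : A ≃* A), Tmap hB φ = Tmap hB' φ' → B = B' ∧ φ = φ') :=
  ⟨fun _ hB φ => ⟨Tmap_mul hB φ, Tmap_bijective hB φ, qForm_Tmap hB φ⟩,
   fun _ _ hB hB' φ φ' => ⟨_, Tmap_comp hB hB' φ φ'⟩,
   fun _ _ hB hB' _ _ => eq_and_eq_of_Tmap_eq hB hB'⟩

/-- For a finite abelian group `A` with character group `A* = Hom(A, ℂˣ)`
and `q(a,χ) = χ(a)`:
(1) each `T_{B,φ}` is a group automorphism of `A × A*` preserving `q`;
(2) `T_{B,φ} ∘ T_{B',φ'} = T_{B'',φφ'}` with `B''(a,a') = B(φ'(a),φ'(a'))·B'(a,a')`;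
(3) `(B,φ) ↦ T_{B,φ}` is injective. -/
theorem Tmap_orthogonal_embedding (A : Type) [CommGroup A] [Finite A] :
    (∀ (B : A → A → ℂˣ) (hB : IsAltBichar B) (φ : A ≃* A),
      (∀ p p' : A × (A →* ℂˣ), Tmap hB φ (p * p') = Tmap hB φ p * Tmap hB φ p') ∧
      Function.Bijective (Tmap hB φ) ∧
      (∀ p : A × (A →* ℂˣ), qForm (Tmap hB φ p) = qForm p)) ∧
    (∀ (B B' : A → A → ℂˣ) (hB : IsAltBichar B) (hB' : IsAltBichar B')
        (φ φ' : A ≃* A),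
      ∃ hB'' : IsAltBichar (fun a a' => B (φ' a) (φ' a') * B' a a'),
        Tmap hB φ ∘ Tmap hB' φ' = Tmap hB'' (φ'.trans φ)) ∧
    (∀ (B B' : A → A → ℂˣ) (hB : IsAltBichar B) (hB' : IsAltBichar B')
        (φ φ' : A ≃* A), Tmap hB φ = Tmap hB' φ' → B = B' ∧ φ = φ') :=
  Tmap_orthogonal_embedding_general A
end
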